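/- Let h0 > 0, h ≥ h0, and M ∈ ℝ with M ≥ 0. Then the function ū(x,t) := φ(x;h0) + (arctan h0)·t + h, where φ(x;h0) := -(1/arctan h0)·ln(cos((arctan h0)·x)), is a lower solution of problem (B) for t > 0: it satisfies the equation u_t = u_xx/(1+u_x^2) with equality, and ū_x(1,t) = h0 ≤ ū(1,t) and ū_x(-1,t) = -h0 ≥ -ū(-1,t). -/

import Mathlib

open Real

/-- Partial derivative in `x` of a function `u(x,t)`. -/
noncomputable def ux (u : ℝ → ℝ → ℝ) (x t : ℝ) : ℝ := deriv (fun y => u y t) x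

/-- Second partial derivative in `x` of a function `u(x,t)`. -/
noncomputable def uxx (u : ℝ → ℝ → ℝ) (x t : ℝ) : ℝ := deriv (fun y => ux u y t) x

/-- Partial derivative in `t` of a function `u(x,t)`. -/
noncomputable def ut (u : ℝ → ℝ → ℝ) (x t : ℝ) : ℝ := deriv (fun s => u x s) t

/-!
The equation `u_t = u_xx / (1 + u_x²)` is graphical curve-shortening flow, and `ū` is a shifted
grim reaper, the translating soliton `-(1/a) log cos (a x) + a t` with `a = arctan h0`. Its slope
is `u_x = tan (a x)`, so `u_xx = a (1 + u_x²)` and the equation holds with both sides equal to `a`.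
At `x = ±1` the slope is `±tan a = ±h0`, and `ū ≥ h ≥ h0` there because `log cos ≤ 0`.
-/

open Set

section Trig

variable {a x : ℝ}

theorem cos_mul_pos_of_abs_lt (ha : |a| < π / 2) (hx : x ∈ Icc (-1) 1) : 0 < cos (a * x) := by
  have hax : |a * x| < π / 2 := by
    rw [abs_mul]
    exact (mul_le_of_le_one_right (abs_nonneg a) (abs_le.mpr hx)).trans_lt ha
  exact cos_pos_of_mem_Ioo (abs_lt.mp hax)

theorem hasDerivAt_tan_mul (hx : cos (a * x) ≠ 0) :
    HasDerivAt (fun y => tan (a * y)) (a * (1 + tan (a * x) ^ 2)) x := by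
  have hlin : HasDerivAt (fun y => a * y) a x := by simpa using (hasDerivAt_id x).const_mul a
  refine ((hasDerivAt_tan hx).comp x hlin).congr_deriv ?_
  rw [← inv_one_add_tan_sq hx]
  field_simp

end Trig

noncomputable def grimReaper (a c : ℝ) (x t : ℝ) : ℝ := -(1 / a) * log (cos (a * x)) + a * t + c

namespace grimReaper

variable {a c x t : ℝ}

theorem hasDerivAt_x (ha : a ≠ 0) (hx : cos (a * x) ≠ 0) :
    HasDerivAt (fun y => grimReaper a c y t) (tan (a * x)) x := by
  have hlin : HasDerivAt (fun y => a * y) a x := by simpa using (hasDerivAt_id x).const_mul a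
  have hlog := ((hasDerivAt_cos (a * x)).comp x hlin).log hx
  refine (((hlog.const_mul (-(1 / a))).add_const (a * t)).add_const c).congr_deriv ?_
  rw [Function.comp_apply, tan_eq_sin_div_cos]
  field_simp

theorem ux_eq (ha : a ≠ 0) (hx : cos (a * x) ≠ 0) : ux (grimReaper a c) x t = tan (a * x) :=
  (hasDerivAt_x ha hx).deriv

theorem hasDerivAt_ux (ha : a ≠ 0) (hx : cos (a * x) ≠ 0) :
    HasDerivAt (fun y => ux (grimReaper a c) y t) (a * (1 + tan (a * x) ^ 2)) x := by
  have hopen : IsOpen {y : ℝ | cos (a * y) ≠ 0} := isOpen_ne_fun (by fun_prop) (by fun_prop)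
  refine (hasDerivAt_tan_mul hx).congr_of_eventuallyEq ?_
  filter_upwards [hopen.mem_nhds hx] with y hy using ux_eq ha hy

theorem hasDerivAt_t : HasDerivAt (fun s => grimReaper a c x s) a t :=
  ((((hasDerivAt_id t).const_mul a).const_add _).add_const c).congr_deriv (mul_one a)

theorem ut_eq_uxx_div (ha : a ≠ 0) (hx : cos (a * x) ≠ 0) :
    ut (grimReaper a c) x t =
      uxx (grimReaper a c) x t / (1 + ux (grimReaper a c) x t ^ 2) := by
  rw [ut, hasDerivAt_t.deriv, uxx, (hasDerivAt_ux ha hx).deriv, ux_eq ha hx]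
  field_simp

theorem const_le (ha : 0 < a) (ht : 0 ≤ t) : c ≤ grimReaper a c x t := by
  have hlog : log (cos (a * x)) ≤ 0 := by
    rw [← log_abs]
    exact log_nonpos (abs_nonneg _) (abs_cos_le_one _)
  have hprofile : 0 ≤ -(1 / a) * log (cos (a * x)) :=
    mul_nonneg_of_nonpos_of_nonpos (by simp [ha.le]) hlog
  have hdrift : 0 ≤ a * t := mul_nonneg ha.le ht
  unfold grimReaper
  linarith

end grimReaper

theorem stmt_9_general (h0 h : ℝ) (hh0 : 0 < h0) (hh : h0 ≤ h)
    (φ : ℝ → ℝ)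
    (hφ : ∀ x : ℝ, φ x = -(1 / Real.arctan h0) * Real.log (Real.cos (Real.arctan h0 * x)))
    (ubar : ℝ → ℝ → ℝ)
    (hubar : ∀ x t : ℝ, ubar x t = φ x + Real.arctan h0 * t + h) :
    (∀ t > (0 : ℝ), ∀ x ∈ Set.Icc (-1 : ℝ) 1,
        DifferentiableAt ℝ (fun y => ubar y t) x ∧
        DifferentiableAt ℝ (fun y => ux ubar y t) x ∧
        DifferentiableAt ℝ (fun s => ubar x s) t ∧
        ut ubar x t = uxx ubar x t / (1 + ux ubar x t ^ 2)) ∧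
    (∀ t > (0 : ℝ),
        ux ubar 1 t = h0 ∧ h0 ≤ ubar 1 t ∧
        ux ubar (-1) t = -h0 ∧ -h0 ≥ -(ubar (-1) t)) := by
  set a := arctan h0
  obtain rfl : ubar = grimReaper a h := by
    funext x t
    rw [hubar, hφ, grimReaper]
  have ha : 0 < a := arctan_pos.mpr hh0
  have habs : |a| < π / 2 := abs_lt.mpr ⟨neg_pi_div_two_lt_arctan h0, arctan_lt_pi_div_two h0⟩
  have hcos : ∀ x ∈ Icc (-1 : ℝ) 1, cos (a * x) ≠ 0 := fun x hx =>
    (cos_mul_pos_of_abs_lt habs hx).ne'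
  have hcos1 := hcos 1 (by norm_num)
  have hcosm1 := hcos (-1) (by norm_num)
  refine ⟨fun t _ x hx => ⟨(grimReaper.hasDerivAt_x ha.ne' (hcos x hx)).differentiableAt,
      (grimReaper.hasDerivAt_ux ha.ne' (hcos x hx)).differentiableAt,
      grimReaper.hasDerivAt_t.differentiableAt, grimReaper.ut_eq_uxx_div ha.ne' (hcos x hx)⟩,
    fun t ht => ⟨?_, ?_, ?_, ?_⟩⟩
  · rw [grimReaper.ux_eq ha.ne' hcos1, mul_one, tan_arctan]
  · exact hh.trans (grimReaper.const_le ha ht.le)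
  · rw [grimReaper.ux_eq ha.ne' hcosm1, mul_neg_one, tan_neg, tan_arctan]
  · exact neg_le_neg (hh.trans (grimReaper.const_le ha ht.le))

/-- for `h0 > 0`, `h ≥ h0`, `M ≥ 0`, the function
`ū(x,t) = φ(x;h0) + (arctan h0)t + h` with
`φ(x;h0) = -(1/arctan h0)·ln(cos((arctan h0)x))` is a lower solution of (B)
for `t > 0`: it satisfies the equation `u_t = u_xx/(1+u_x²)` with equality,
`ū_x(1,t) = h0 ≤ ū(1,t)` and `ū_x(-1,t) = -h0 ≥ -ū(-1,t)`. -/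
theorem stmt_9 (h0 h M : ℝ) (hh0 : 0 < h0) (hh : h0 ≤ h) (hM : 0 ≤ M)
    (φ : ℝ → ℝ)
    (hφ : ∀ x : ℝ, φ x = -(1 / Real.arctan h0) * Real.log (Real.cos (Real.arctan h0 * x)))
    (ubar : ℝ → ℝ → ℝ)
    (hubar : ∀ x t : ℝ, ubar x t = φ x + Real.arctan h0 * t + h) :
    (∀ t > (0 : ℝ), ∀ x ∈ Set.Icc (-1 : ℝ) 1,
        DifferentiableAt ℝ (fun y => ubar y t) x ∧
        DifferentiableAt ℝ (fun y => ux ubar y t) x ∧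
        DifferentiableAt ℝ (fun s => ubar x s) t ∧
        ut ubar x t = uxx ubar x t / (1 + ux ubar x t ^ 2)) ∧
    (∀ t > (0 : ℝ),
        ux ubar 1 t = h0 ∧ h0 ≤ ubar 1 t ∧
        ux ubar (-1) t = -h0 ∧ -h0 ≥ -(ubar (-1) t)) :=
  stmt_9_general h0 h hh0 hh φ hφ ubar hubar
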